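/- Let D be a directed graph on a vertex set containing distinct vertices u, v, w₁, w₂, whose edges among these vertices are exactly u → w₁, v → w₁, w₁ → w₂, w₂ → u, and w₂ → v (the merge-split gadget replacing the bidirectional edge between u and v in the time-expanded graph). Then every directed path in D that starts in {u, v}, ends in {u, v}, and whose internal vertices lie in {w₁, w₂} traverses the edge (w₁, w₂). Consequently, any family of pairwise edge-disjoint such paths has at most one element, so in an integral flow of unit edge capacities at most one agent can cross between u and v through the gadget in a given time step, and in particular two agents cannot traverse the edge between u and v in opposite directions simultaneously (no head-on collisions). -/

import Mathlib

/-!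
Leaving `u` or `v` inside the gadget, the only available edge goes to the merge vertex `w₁`,
which is not an endpoint, so the path continues; the only edge leaving `w₁` goes to the split
vertex `w₂`. Hence every crossing uses the edge `(w₁, w₂)` as its second step, and two
edge-disjoint crossings would have to share it.
-/

theorem eq_of_forall_traverses_of_pairwise_edge_disjoint {ι V : Type*} {n : ι → ℕ}
    {p : ι → ℕ → V} {x y : V} (htraverse : ∀ a, ∃ i < n a, p a i = x ∧ p a (i + 1) = y)
    (hdisj : ∀ a b : ι, a ≠ b → ∀ i < n a, ∀ j < n b,
      ¬(p a i = p b j ∧ p a (i + 1) = p b (j + 1)))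
    (a b : ι) : a = b := by
  by_contra hab
  obtain ⟨i, hi, hix, hiy⟩ := htraverse a
  obtain ⟨j, hj, hjx, hjy⟩ := htraverse b
  exact hdisj a b hab i hi j hj ⟨hix.trans hjx.symm, hiy.trans hjy.symm⟩

theorem mem_union_of_le_of_interior_mem {V : Type*} {A B : Set V} {n : ℕ} {p : ℕ → V}
    (h0 : p 0 ∈ A) (hend : p n ∈ A) (hint : ∀ i, 0 < i → i < n → p i ∈ B)
    {i : ℕ} (hi : i ≤ n) : p i ∈ A ∪ B := by
  rcases Nat.eq_zero_or_pos i with rfl | hpos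
  · exact Or.inl h0
  rcases hi.lt_or_eq with hlt | rfl
  · exact Or.inr (hint i hpos hlt)
  · exact Or.inl hend

section Gadget

variable {V : Type*} {E : V → V → Prop} {u v w1 w2 : V}
  (hE : ∀ a b, a ∈ ({u, v, w1, w2} : Set V) → b ∈ ({u, v, w1, w2} : Set V) →
    (E a b ↔ (a = u ∧ b = w1) ∨ (a = v ∧ b = w1) ∨ (a = w1 ∧ b = w2) ∨
      (a = w2 ∧ b = u) ∨ (a = w2 ∧ b = v)))
include hE

theorem gadget_eq_merge_of_edge_from_terminal (huw1 : u ≠ w1) (huw2 : u ≠ w2)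
    (hvw1 : v ≠ w1) (hvw2 : v ≠ w2) {a b : V} (ha : a ∈ ({u, v} : Set V))
    (hb : b ∈ ({u, v, w1, w2} : Set V)) (hab : E a b) : b = w1 := by
  have ha' : a ∈ ({u, v, w1, w2} : Set V) := by
    rcases ha with rfl | rfl <;> simp
  rcases ha with rfl | rfl <;>
    rcases (hE _ _ ha' hb).mp hab with ⟨-, h⟩ | ⟨-, h⟩ | ⟨h, -⟩ | ⟨h, -⟩ | ⟨h, -⟩ <;>
    first | exact h | (subst h; simp_all)

theorem gadget_eq_split_of_edge_from_merge (huw1 : u ≠ w1) (hvw1 : v ≠ w1) (hw12 : w1 ≠ w2)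
    {b : V} (hb : b ∈ ({u, v, w1, w2} : Set V)) (hb' : E w1 b) : b = w2 := by
  rcases (hE _ _ (by simp) hb).mp hb' with ⟨h, -⟩ | ⟨h, -⟩ | ⟨-, h⟩ | ⟨h, -⟩ | ⟨h, -⟩
  · exact absurd h.symm huw1
  · exact absurd h.symm hvw1
  · exact h
  · exact absurd h hw12
  · exact absurd h hw12

theorem gadget_crossing_starts_merge_split (huw1 : u ≠ w1) (huw2 : u ≠ w2)
    (hvw1 : v ≠ w1) (hvw2 : v ≠ w2) (hw12 : w1 ≠ w2) {n : ℕ} {p : ℕ → V} (hn : 0 < n)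
    (hedge : ∀ i < n, E (p i) (p (i + 1))) (h0 : p 0 ∈ ({u, v} : Set V))
    (hend : p n ∈ ({u, v} : Set V)) (hint : ∀ i, 0 < i → i < n → p i ∈ ({w1, w2} : Set V)) :
    1 < n ∧ p 1 = w1 ∧ p 2 = w2 := by
  have hmem : ∀ i ≤ n, p i ∈ ({u, v, w1, w2} : Set V) := fun i hi => by
    simpa only [Set.insert_union, Set.singleton_union] using
      mem_union_of_le_of_interior_mem h0 hend hint hi
  have hp1 : p 1 = w1 :=
    gadget_eq_merge_of_edge_from_terminal hE huw1 huw2 hvw1 hvw2 h0 (hmem 1 hn) (hedge 0 hn)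
  have hn1 : 1 < n := by
    refine lt_of_le_of_ne hn fun h => ?_
    rw [← h, hp1] at hend
    rcases hend with h' | h'
    · exact huw1 h'.symm
    · exact hvw1 h'.symm
  have hp2 : p 2 = w2 :=
    gadget_eq_split_of_edge_from_merge hE huw1 hvw1 hw12 (hmem 2 hn1) (hp1 ▸ hedge 1 hn1)
  exact ⟨hn1, hp1, hp2⟩

end Gadget

theorem gadget_no_head_on_general {V : Type*} (E : V → V → Prop) (u v w1 w2 : V)
    (huw1 : u ≠ w1) (huw2 : u ≠ w2)
    (hvw1 : v ≠ w1) (hvw2 : v ≠ w2) (hw12 : w1 ≠ w2)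
    (hE : ∀ a b, a ∈ ({u, v, w1, w2} : Set V) → b ∈ ({u, v, w1, w2} : Set V) →
      (E a b ↔ (a = u ∧ b = w1) ∨ (a = v ∧ b = w1) ∨ (a = w1 ∧ b = w2) ∨
        (a = w2 ∧ b = u) ∨ (a = w2 ∧ b = v))) :
    (∀ (n : ℕ) (p : ℕ → V), 0 < n → (∀ i < n, E (p i) (p (i + 1))) →
      p 0 ∈ ({u, v} : Set V) → p n ∈ ({u, v} : Set V) →
      (∀ i, 0 < i → i < n → p i ∈ ({w1, w2} : Set V)) →
      ∃ i < n, p i = w1 ∧ p (i + 1) = w2) ∧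
    (∀ (ι : Type) (n : ι → ℕ) (p : ι → ℕ → V),
      (∀ a : ι, 0 < n a ∧ (∀ i < n a, E (p a i) (p a (i + 1))) ∧
        p a 0 ∈ ({u, v} : Set V) ∧ p a (n a) ∈ ({u, v} : Set V) ∧
        ∀ i, 0 < i → i < n a → p a i ∈ ({w1, w2} : Set V)) →
      (∀ a b : ι, a ≠ b → ∀ i < n a, ∀ j < n b,
        ¬(p a i = p b j ∧ p a (i + 1) = p b (j + 1))) →
      ∀ a b : ι, a = b) := by
  have htraverse : ∀ (n : ℕ) (p : ℕ → V), 0 < n → (∀ i < n, E (p i) (p (i + 1))) →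
      p 0 ∈ ({u, v} : Set V) → p n ∈ ({u, v} : Set V) →
      (∀ i, 0 < i → i < n → p i ∈ ({w1, w2} : Set V)) →
      ∃ i < n, p i = w1 ∧ p (i + 1) = w2 := fun n p hn hedge h0 hend hint =>
    ⟨1, gadget_crossing_starts_merge_split hE huw1 huw2 hvw1 hvw2 hw12 hn hedge h0 hend hint⟩
  refine ⟨htraverse, fun ι n p hpaths hdisj => ?_⟩
  refine eq_of_forall_traverses_of_pairwise_edge_disjoint (x := w1) (y := w2) (fun a => ?_) hdisj
  obtain ⟨hn, hedge, h0, hend, hint⟩ := hpaths a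
  exact htraverse (n a) (p a) hn hedge h0 hend hint

/-- in the merge-split gadget (internal vertices `w₁`, `w₂`, with edges
`u → w₁`, `v → w₁`, `w₁ → w₂`, `w₂ → u`, `w₂ → v` being exactly the edges among
`{u, v, w₁, w₂}`), every directed path of positive length starting in `{u, v}`, ending
in `{u, v}`, with all internal vertices in `{w₁, w₂}`, traverses the edge `(w₁, w₂)`.
Consequently any family of pairwise edge-disjoint such paths has at most one element:
at most one agent can cross between `u` and `v` through the gadget in a given time
step, and in particular no two agents can traverse the edge between `u` and `v` in
opposite directions simultaneously. -/
theorem gadget_no_head_on {V : Type*} (E : V → V → Prop) (u v w1 w2 : V)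
    (huv : u ≠ v) (huw1 : u ≠ w1) (huw2 : u ≠ w2)
    (hvw1 : v ≠ w1) (hvw2 : v ≠ w2) (hw12 : w1 ≠ w2)
    (hE : ∀ a b, a ∈ ({u, v, w1, w2} : Set V) → b ∈ ({u, v, w1, w2} : Set V) →
      (E a b ↔ (a = u ∧ b = w1) ∨ (a = v ∧ b = w1) ∨ (a = w1 ∧ b = w2) ∨
        (a = w2 ∧ b = u) ∨ (a = w2 ∧ b = v))) :
    (∀ (n : ℕ) (p : ℕ → V), 0 < n → (∀ i < n, E (p i) (p (i + 1))) →
      p 0 ∈ ({u, v} : Set V) → p n ∈ ({u, v} : Set V) →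
      (∀ i, 0 < i → i < n → p i ∈ ({w1, w2} : Set V)) →
      ∃ i < n, p i = w1 ∧ p (i + 1) = w2) ∧
    (∀ (ι : Type) (n : ι → ℕ) (p : ι → ℕ → V),
      (∀ a : ι, 0 < n a ∧ (∀ i < n a, E (p a i) (p a (i + 1))) ∧
        p a 0 ∈ ({u, v} : Set V) ∧ p a (n a) ∈ ({u, v} : Set V) ∧
        ∀ i, 0 < i → i < n a → p a i ∈ ({w1, w2} : Set V)) →
      (∀ a b : ι, a ≠ b → ∀ i < n a, ∀ j < n b,
        ¬(p a i = p b j ∧ p a (i + 1) = p b (j + 1))) →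
      ∀ a b : ι, a = b) :=
  gadget_no_head_on_general E u v w1 w2 huw1 huw2 hvw1 hvw2 hw12 hE
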